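/- arXiv:2401.06870 — 2 statements merged into one kernel-verified Lean document; each statement's English description precedes it below -/
import Mathlib

section
/- The set ℤ × F₂ equipped with the binary operation (m₁,f₁) • (m₂,f₂) := (2m₁m₂ + m₁ + m₂, f₁ · E_{m₁,f₁}(f₂)) is a monoid with identity element (0, 1), where E_{m,f} is the endomorphism of F₂ sending x ↦ x^{2m+1} and y ↦ f⁻¹y^{2m+1}f. -/
abbrev F2 := FreeGroup (Fin 2)
def xx : F2 := FreeGroup.of 0
def yy : F2 := FreeGroup.of 1

/-- The endomorphism E_{m,f} of F₂ sending x ↦ x^{2m+1}, y ↦ f⁻¹y^{2m+1}f. -/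
def Emap (m : ℤ) (f : F2) : F2 →* F2 :=
  FreeGroup.lift ![xx ^ (2 * m + 1), f⁻¹ * yy ^ (2 * m + 1) * f]

/-- The binary operation • on ℤ × F₂. -/
def star (a b : ℤ × F2) : ℤ × F2 :=
  (2 * a.1 * b.1 + a.1 + b.1, a.2 * Emap a.1 a.2 b.2)

/-!
The exponent map `m ↦ 2m + 1` turns `(m₁, m₂) ↦ 2m₁m₂ + m₁ + m₂` into multiplication of odd
integers, and with it one checks on the generators that
`E_{m₁,f₁} ∘ E_{m₂,f₂} = E_{(m₁,f₁) • (m₂,f₂)}`. Associativity of `•` in the second coordinate is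
then the cocycle identity `f₁ E₁(f₂ E₂(f₃)) = (f₁ E₁(f₂)) (E₁ ∘ E₂)(f₃)`, and `E_{0,1}` is the
identity.
-/

@[simp]
lemma Emap_xx (m : ℤ) (f : F2) : Emap m f xx = xx ^ (2 * m + 1) := by
  simp [Emap, xx]

@[simp]
lemma Emap_yy (m : ℤ) (f : F2) : Emap m f yy = f⁻¹ * yy ^ (2 * m + 1) * f := by
  simp [Emap, yy]

lemma F2.hom_ext {φ ψ : F2 →* F2} (hx : φ xx = ψ xx) (hy : φ yy = ψ yy) : φ = ψ :=
  FreeGroup.ext_hom _ _ fun i => by fin_cases i <;> assumption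

lemma inv_mul_mul_zpow {G : Type*} [Group G] (a b : G) (n : ℤ) :
    (a⁻¹ * b * a) ^ n = a⁻¹ * b ^ n * a := by
  simpa using conj_zpow (i := n) (a := a⁻¹) (b := b)

lemma two_mul_add_one_mul_two_mul_add_one (m₁ m₂ : ℤ) :
    (2 * m₁ + 1) * (2 * m₂ + 1) = 2 * (2 * m₁ * m₂ + m₁ + m₂) + 1 := by
  ring

lemma Emap_comp_Emap (m₁ m₂ : ℤ) (f₁ f₂ : F2) :
    (Emap m₁ f₁).comp (Emap m₂ f₂) = Emap (2 * m₁ * m₂ + m₁ + m₂) (f₁ * Emap m₁ f₁ f₂) := by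
  refine F2.hom_ext ?_ ?_
  · simp only [MonoidHom.comp_apply, Emap_xx, map_zpow, ← zpow_mul,
      two_mul_add_one_mul_two_mul_add_one]
  · simp only [MonoidHom.comp_apply, Emap_yy, map_mul, map_inv, map_zpow, inv_mul_mul_zpow,
      ← zpow_mul, two_mul_add_one_mul_two_mul_add_one, mul_inv_rev]
    group

lemma Emap_zero_one : Emap 0 1 = MonoidHom.id F2 :=
  F2.hom_ext (by simp) (by simp)

/-- (ℤ × F₂, •) is a monoid with identity (0,1). -/
theorem star_monoid :
    (∀ a b c : ℤ × F2, star (star a b) c = star a (star b c)) ∧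
    (∀ a : ℤ × F2, star (0, 1) a = a) ∧
    (∀ a : ℤ × F2, star a (0, 1) = a) := by
  refine ⟨?_, ?_, ?_⟩
  · rintro ⟨m₁, f₁⟩ ⟨m₂, f₂⟩ ⟨m₃, f₃⟩
    simp only [_root_.star, Prod.mk.injEq]
    refine ⟨by ring, ?_⟩
    rw [map_mul, ← Emap_comp_Emap, MonoidHom.comp_apply, mul_assoc]
  · rintro ⟨m, f⟩
    simp [_root_.star, Emap_zero_one]
  · rintro ⟨m, f⟩
    simp [_root_.star]
end

section
/- For any group G and any finite-index normal subgroup N of G, the kernel of the natural continuous homomorphism from the profinite completion Ĝ to G/N is topologically isomorphic to the profinite completion of N. -/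
/-- The directed poset of finite-index normal subgroups of G. -/
def NFIs (G : Type*) [Group G] := {N : Subgroup G // N.Normal ∧ N.FiniteIndex}

instance (G : Type*) [Group G] (N : NFIs G) : (N.1).Normal := N.2.1

instance (G : Type*) [Group G] (N : NFIs G) : TopologicalSpace (G ⧸ N.1) := ⊥

instance (G : Type*) [Group G] (N : NFIs G) : DiscreteTopology (G ⧸ N.1) := ⟨rfl⟩

/-- The transition map G/K → G/N for K ≤ N. -/
def transMap {G : Type*} [Group G] {K N : NFIs G} (h : K.1 ≤ N.1) :
    G ⧸ K.1 →* G ⧸ N.1 :=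
  QuotientGroup.map K.1 N.1 (MonoidHom.id G) (fun _ hg => h hg)

/-- The profinite completion of G, realized as the inverse limit of the quotients
G/N over finite-index normal subgroups N, i.e. as the subgroup of the product
∏ G/N consisting of compatible families (with the subspace topology of the
product topology). -/
def profCompletion (G : Type*) [Group G] : Subgroup (∀ N : NFIs G, G ⧸ N.1) where
  carrier := {x | ∀ (K N : NFIs G) (h : K.1 ≤ N.1), transMap h (x K) = x N}
  one_mem' := by
    intro K N h
    show transMap h 1 = 1
    exact map_one _
  mul_mem' := by
    intro a b ha hb K N h
    show transMap h (a K * b K) = a N * b N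
    rw [map_mul, ha K N h, hb K N h]
  inv_mem' := by
    intro a ha K N h
    show transMap h (a K)⁻¹ = (a N)⁻¹
    rw [map_inv, ha K N h]

/-- The standard homomorphism j : G → Ĝ. -/
def jmap (G : Type*) [Group G] : G →* profCompletion G where
  toFun g := ⟨fun N => QuotientGroup.mk g, by
    intro K N h
    show transMap h (QuotientGroup.mk g) = QuotientGroup.mk g
    simp [transMap]; rfl⟩
  map_one' := Subtype.ext (funext fun N => rfl)
  map_mul' g h := Subtype.ext (funext fun N => rfl)

/-- The natural continuous projection Ĝ → G/N. -/
def projN (G : Type*) [Group G] (N : NFIs G) : profCompletion G →* G ⧸ N.1 :=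
  (Pi.evalMonoidHom _ N).comp (profCompletion G).subtype

/-!
Restriction `K ↦ K ∩ N` sends finite-index normal subgroups of `G` to those of `N`, and the
normal core in `G` of a finite-index normal subgroup `H` of `N` is a finite-index normal subgroup
of `G` whose restriction lies in `H` (this uses that `N` has finite index). So both families are
cofinal in each other, and the maps `N ⧸ (K ∩ N) → G ⧸ K` assemble into a continuous
isomorphism of `N̂` onto the kernel of `Ĝ → G ⧸ N`: a coordinate `x_K` with `K ≤ N` of a point of
the kernel lifts uniquely to `N ⧸ (K ∩ N)`. Since `N̂` is compact and the kernel Hausdorff, the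
inverse is continuous too.
-/

open Function

namespace NFIs

variable {G : Type*} [Group G] {N : Subgroup G}

def restrict (K : NFIs G) : NFIs N :=
  haveI := K.2.2
  ⟨K.1.subgroupOf N, K.2.1.comap _, inferInstance⟩

lemma restrict_mono {K K' : NFIs G} (h : K.1 ≤ K'.1) : (K.restrict (N := N)).1 ≤ (K'.restrict).1 :=
  Subgroup.comap_mono h

def core (hfin : N.FiniteIndex) (H : NFIs N) : NFIs G :=
  haveI : (H.1.map N.subtype).FiniteIndex :=
    ⟨by rw [Subgroup.index_map_subtype]; exact mul_ne_zero H.2.2.index_ne_zero hfin.index_ne_zero⟩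
  ⟨(H.1.map N.subtype).normalCore, Subgroup.normalCore_normal _, inferInstance⟩

variable (hfin : N.FiniteIndex)

lemma core_mono {H H' : NFIs N} (h : H.1 ≤ H'.1) : (core hfin H).1 ≤ (core hfin H').1 :=
  Subgroup.normalCore_mono (Subgroup.map_mono h)

lemma core_le (H : NFIs N) : (core hfin H).1 ≤ N := fun _ hg =>
  Subgroup.map_subtype_le _ ((H.1.map N.subtype).normalCore_le hg)

lemma restrict_core_le (H : NFIs N) : (restrict (core hfin H)).1 ≤ H.1 := fun _ hn =>
  (Subgroup.mem_map_iff_mem Subtype.val_injective).mp ((H.1.map N.subtype).normalCore_le hn)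

lemma core_restrict_le (K : NFIs G) : (core hfin (restrict (N := N) K)).1 ≤ K.1 :=
  (Subgroup.normalCore_le _).trans (Subgroup.map_comap_le _ _)

end NFIs

section ProfCompletion

variable {G : Type*} [Group G]

lemma transMap_transMap {K K' K'' : NFIs G} (h : K.1 ≤ K'.1) (h' : K'.1 ≤ K''.1) (z : G ⧸ K.1) :
    transMap h' (transMap h z) = transMap (h.trans h') z :=
  QuotientGroup.induction_on z fun _ => rfl

instance (K : NFIs G) : Finite (G ⧸ K.1) :=
  @Subgroup.finite_quotient_of_finiteIndex _ _ _ K.2.2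

lemma isClosed_profCompletion :
    IsClosed (profCompletion G : Set (∀ K : NFIs G, G ⧸ K.1)) := by
  have : (profCompletion G : Set (∀ K : NFIs G, G ⧸ K.1)) =
      ⋂ (K : NFIs G) (K' : NFIs G) (h : K.1 ≤ K'.1), {x | transMap h (x K) = x K'} := by
    ext x
    simp only [Set.mem_iInter]
    rfl
  rw [this]
  exact isClosed_iInter fun K => isClosed_iInter fun K' => isClosed_iInter fun _ =>
    isClosed_eq (continuous_of_discreteTopology.comp (continuous_apply K)) (continuous_apply K')

instance : CompactSpace (profCompletion G) :=
  isCompact_iff_compactSpace.mp isClosed_profCompletion.isCompact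

end ProfCompletion

section ProfCompletionMap

variable {G : Type*} [Group G] (N : Subgroup G)

def restrictQuotientMap (K : NFIs G) : N ⧸ (K.restrict (N := N)).1 →* G ⧸ K.1 :=
  QuotientGroup.map _ _ N.subtype fun _ hn => hn

variable {N}

lemma restrictQuotientMap_injective (K : NFIs G) : Injective (restrictQuotientMap N K) := by
  refine (injective_iff_map_eq_one _).mpr fun z => QuotientGroup.induction_on z fun n hn => ?_
  exact (QuotientGroup.eq_one_iff n).mpr ((QuotientGroup.eq_one_iff (n : G)).mp hn)

lemma transMap_restrictQuotientMap {K K' : NFIs G} (h : K.1 ≤ K'.1) (z : N ⧸ K.restrict.1) :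
    transMap h (restrictQuotientMap N K z) =
      restrictQuotientMap N K' (transMap (NFIs.restrict_mono h) z) :=
  QuotientGroup.induction_on z fun _ => rfl

variable (N) in
def profCompletionMap : profCompletion N →* profCompletion G where
  toFun y := ⟨fun K => restrictQuotientMap N K (y.1 K.restrict), fun K K' h => by
    rw [transMap_restrictQuotientMap, y.2]⟩
  map_one' := Subtype.ext <| funext fun K => map_one (restrictQuotientMap N K)
  map_mul' a b := Subtype.ext <| funext fun K => map_mul (restrictQuotientMap N K) _ _

lemma continuous_profCompletionMap : Continuous (profCompletionMap N) :=
  continuous_induced_rng.mpr <| continuous_pi fun K => continuous_of_discreteTopology.comp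
    ((continuous_apply K.restrict).comp continuous_subtype_val)

lemma profCompletionMap_injective (hfin : N.FiniteIndex) : Injective (profCompletionMap N) := by
  refine (injective_iff_map_eq_one _).mpr fun y hy => Subtype.ext <| funext fun H => ?_
  have hcore : y.1 (NFIs.core hfin H).restrict = 1 := restrictQuotientMap_injective _ <| by
    rw [map_one]
    exact congrArg (fun x : profCompletion G => x.1 (NFIs.core hfin H)) hy
  rw [← y.2 _ H (NFIs.restrict_core_le hfin H), hcore, map_one]
  rfl

lemma mem_range_restrictQuotientMap (hN : N.Normal) (hfin : N.FiniteIndex)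
    {x : profCompletion G} (hx : projN G ⟨N, hN, hfin⟩ x = 1) {K : NFIs G} (hK : K.1 ≤ N) :
    x.1 K ∈ (restrictQuotientMap N K).range := by
  obtain ⟨g, hg⟩ := QuotientGroup.mk_surjective (x.1 K)
  have hgN : transMap (N := ⟨N, hN, hfin⟩) hK (g : G ⧸ K.1) = 1 := by
    rw [hg]
    exact (x.2 K ⟨N, hN, hfin⟩ hK).trans hx
  exact ⟨QuotientGroup.mk ⟨g, (QuotientGroup.eq_one_iff g).mp hgN⟩, hg⟩

lemma range_profCompletionMap (hN : N.Normal) (hfin : N.FiniteIndex) :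
    (profCompletionMap N).range = (projN G ⟨N, hN, hfin⟩).ker := by
  refine le_antisymm ?_ fun x hx => ?_
  · rintro _ ⟨y, rfl⟩
    change restrictQuotientMap N ⟨N, hN, hfin⟩ (y.1 _) = 1
    exact QuotientGroup.induction_on (y.1 _) fun n => (QuotientGroup.eq_one_iff (n : G)).mpr n.2
  choose z hz using fun H : NFIs N =>
    mem_range_restrictQuotientMap hN hfin hx (NFIs.core_le hfin H)
  -- lifts are unique, so the chosen lifts `z H` of `x` at `core H` are compatible
  have hz_mono {H H' : NFIs N} (h : H.1 ≤ H'.1) :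
      transMap (NFIs.restrict_mono (NFIs.core_mono hfin h)) (z H) = z H' := by
    apply restrictQuotientMap_injective
    rw [← transMap_restrictQuotientMap (NFIs.core_mono hfin h), hz, hz, x.2]
  refine ⟨⟨fun H => transMap (NFIs.restrict_core_le hfin H) (z H), fun H H' h => ?_⟩, ?_⟩
  · dsimp only
    rw [← hz_mono h, transMap_transMap, transMap_transMap]
  · refine Subtype.ext <| funext fun K => ?_
    change restrictQuotientMap N K (transMap _ _) = _
    rw [← transMap_restrictQuotientMap (NFIs.core_restrict_le hfin K), hz, x.2]

end ProfCompletionMap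

/-- For a finite-index normal subgroup N of G, the kernel of the natural
continuous homomorphism Ĝ → G/N is topologically isomorphic to the profinite
completion of N. -/
theorem ker_proj_iso_profCompletion (G : Type*) [Group G] (N : Subgroup G)
    (hN : N.Normal) (hfin : N.FiniteIndex) :
    ∃ e : (projN G ⟨N, hN, hfin⟩).ker ≃* profCompletion N,
      Continuous e ∧ Continuous e.symm := by
  let ψ : profCompletion N ≃* (projN G ⟨N, hN, hfin⟩).ker :=
    (MonoidHom.ofInjective (profCompletionMap_injective hfin)).trans
      (MulEquiv.subgroupCongr (range_profCompletionMap hN hfin))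
  have hψ : Continuous ψ := continuous_induced_rng.mpr (continuous_profCompletionMap (N := N))
  exact ⟨ψ.symm, hψ.continuous_symm_of_equiv_compact_to_t2, hψ⟩
end
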